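/- The gradient of the surrogate objective L̂ with respect to the reward parameter θ is the difference of the expected discounted reward gradients along expert and agent trajectories: ∇L̂(θ) = E_{τ^E∼(η,π^E,P)}[ Σ_{t≥0} γ^t ∇_θ r(s_t,a_t;θ) ] − E_{τ^A∼(η,π_θ,P̂)}[ Σ_{t≥0} γ^t ∇_θ r(s_t,a_t;θ) ]. -/

import Mathlib

open Real BigOperators Finset

noncomputable section

/-- `P` is a transition kernel: each row `P s a ·` is a probability distribution. -/
def IsKernel {S A : Type} [Fintype S] (P : S → A → S → ℝ) : Prop :=
  (∀ s a s', 0 ≤ P s a s') ∧ ∀ s a, ∑ s', P s a s' = 1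

/-- `p` is a policy: each `p s ·` is a probability distribution over actions. -/
def IsPolicy {S A : Type} [Fintype A] (p : S → A → ℝ) : Prop :=
  (∀ s a, 0 ≤ p s a) ∧ ∀ s, ∑ a, p s a = 1

/-- `η` is a probability distribution over states. -/
def IsDist {S : Type} [Fintype S] (η : S → ℝ) : Prop :=
  (∀ s, 0 ≤ η s) ∧ ∑ s, η s = 1

/-- Distribution of the state at time `t` under initial distribution `η`,
policy `pol` and transition kernel `P`. -/
def stateDist {S A : Type} [Fintype S] [Fintype A]
    (P : S → A → S → ℝ) (pol : S → A → ℝ) (η : S → ℝ) : ℕ → S → ℝ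
  | 0 => η
  | (t + 1) => fun s' => ∑ s, ∑ a, stateDist P pol η t s * pol s a * P s a s'

/-- `E_{τ ∼ (η, pol, P)} [ ∑_t γ^t f(s_t, a_t) ]`. -/
def discSum {S A : Type} [Fintype S] [Fintype A]
    (γ : ℝ) (P : S → A → S → ℝ) (pol : S → A → ℝ) (η : S → ℝ) (f : S → A → ℝ) : ℝ :=
  ∑' t : ℕ, γ ^ t * ∑ s, ∑ a, stateDist P pol η t s * pol s a * f s a

/-- Discounted state-action visitation measure
`d(s,a) = (1-γ) pol(a|s) ∑_t γ^t Pr(s_t = s)`. -/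
def visit {S A : Type} [Fintype S] [Fintype A]
    (γ : ℝ) (P : S → A → S → ℝ) (pol : S → A → ℝ) (η : S → ℝ) (s : S) (a : A) : ℝ :=
  (1 - γ) * pol s a * ∑' t : ℕ, γ ^ t * stateDist P pol η t s

/-- Log-sum-exp soft value function `V(s) = log ∑_a exp Q(s,a)`. -/
def lse {S A : Type} [Fintype A] (Q : S → A → ℝ) (s : S) : ℝ :=
  Real.log (∑ a, Real.exp (Q s a))

/-- Softmax policy `π(a|s) = exp Q(s,a) / ∑_{a'} exp Q(s,a')`. -/
def softmax {S A : Type} [Fintype A] (Q : S → A → ℝ) (s : S) (a : A) : ℝ :=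
  Real.exp (Q s a) / ∑ a', Real.exp (Q s a')

/-- Vector-valued discounted expectation
`E_{τ ∼ (η, pol, P)} [ ∑_t γ^t f(s_t, a_t) ]` for `f` taking values in a normed space. -/
def discSumVec {S A : Type} [Fintype S] [Fintype A] {E : Type}
    [NormedAddCommGroup E] [NormedSpace ℝ E]
    (γ : ℝ) (P : S → A → S → ℝ) (pol : S → A → ℝ) (η : S → ℝ) (f : S → A → E) : E :=
  ∑' t : ℕ, γ ^ t • ∑ s, ∑ a, (stateDist P pol η t s * pol s a) • f s a

open Real BigOperators Finset

set_option linter.unusedSectionVars false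

section Basic
variable {S A : Type} [Fintype S] [Fintype A] [Nonempty S] [Nonempty A]

lemma softmax_isPolicy (Q : S → A → ℝ) : IsPolicy (softmax Q) := by
  constructor
  · intro s a
    exact div_nonneg (Real.exp_nonneg _) (Finset.sum_nonneg fun _ _ => Real.exp_nonneg _)
  · intro s
    have h : (0:ℝ) < ∑ a', Real.exp (Q s a') :=
      Finset.sum_pos (fun _ _ => Real.exp_pos _) Finset.univ_nonempty
    simp only [softmax, ← Finset.sum_div]
    exact div_self h.ne'

lemma stateDist_nonneg {P : S → A → S → ℝ} {pol : S → A → ℝ} {η : S → ℝ}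
    (hP : IsKernel P) (hpol : IsPolicy pol) (hη : IsDist η) (t : ℕ) (s : S) :
    0 ≤ stateDist P pol η t s := by
  induction t generalizing s with
  | zero => exact hη.1 s
  | succ t ih =>
    exact Finset.sum_nonneg fun s' _ => Finset.sum_nonneg fun a _ =>
      mul_nonneg (mul_nonneg (ih s') (hpol.1 s' a)) (hP.1 s' a s)

lemma stateDist_sum {P : S → A → S → ℝ} {pol : S → A → ℝ} {η : S → ℝ}
    (hP : IsKernel P) (hpol : IsPolicy pol) (hη : IsDist η) (t : ℕ) :
    ∑ s, stateDist P pol η t s = 1 := by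
  induction t with
  | zero => exact hη.2
  | succ t ih =>
    simp only [stateDist]
    rw [Finset.sum_comm]
    calc ∑ s, ∑ s', ∑ a, stateDist P pol η t s * pol s a * P s a s'
        = ∑ s, ∑ a, ∑ s', stateDist P pol η t s * pol s a * P s a s' :=
          Finset.sum_congr rfl fun s _ => Finset.sum_comm
      _ = ∑ s, ∑ a, stateDist P pol η t s * pol s a := by
          refine Finset.sum_congr rfl fun s _ => Finset.sum_congr rfl fun a _ => ?_
          rw [← Finset.mul_sum, hP.2, mul_one]
      _ = ∑ s, stateDist P pol η t s := by
          refine Finset.sum_congr rfl fun s _ => ?_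
          rw [← Finset.mul_sum, hpol.2, mul_one]
      _ = 1 := ih

/-- weighted sums over (s,a)-pairs of stateDist*pol are convex combos  -/
lemma weight_sum {P : S → A → S → ℝ} {pol : S → A → ℝ} {η : S → ℝ}
    (hP : IsKernel P) (hpol : IsPolicy pol) (hη : IsDist η) (t : ℕ) :
    ∑ s, ∑ a, stateDist P pol η t s * pol s a = 1 := by
  rw [← stateDist_sum hP hpol hη t]
  exact Finset.sum_congr rfl fun s _ => by rw [← Finset.mul_sum, hpol.2, mul_one]

/-- lse is monotone-ish Lipschitz bound -/
lemma lse_sub_le (q1 q2 : S → A → ℝ) (s : S) (c : ℝ) (h : ∀ a, q1 s a ≤ q2 s a + c) :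
    lse q1 s ≤ lse q2 s + c := by
  have h2 : (0:ℝ) < ∑ a, Real.exp (q2 s a) :=
    Finset.sum_pos (fun _ _ => Real.exp_pos _) Finset.univ_nonempty
  have : lse q1 s ≤ Real.log (∑ a, Real.exp (q2 s a + c)) := by
    apply Real.log_le_log (Finset.sum_pos (fun _ _ => Real.exp_pos _) Finset.univ_nonempty)
    exact Finset.sum_le_sum fun a _ => Real.exp_le_exp.2 (h a)
  refine this.trans ?_
  simp only [Real.exp_add, ← Finset.sum_mul]
  rw [Real.log_mul h2.ne' (Real.exp_pos c).ne', Real.log_exp]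
  exact le_refl _

lemma abs_lse_sub_le (q1 q2 : S → A → ℝ) (s : S) (c : ℝ)
    (h : ∀ a, |q1 s a - q2 s a| ≤ c) : |lse q1 s - lse q2 s| ≤ c := by
  rw [abs_le]
  constructor
  · have := lse_sub_le q2 q1 s c (fun a => by have := (abs_le.1 (h a)).1; linarith)
    linarith
  · have := lse_sub_le q1 q2 s c (fun a => by have := (abs_le.1 (h a)).2; linarith)
    linarith

end Basic
open Real BigOperators Finset
set_option linter.unusedSectionVars false
section D
variable {S A : Type} [Fintype S] [Fintype A] [Nonempty S] [Nonempty A]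

/-- coordinate projection CLM -/
noncomputable def coordCLM (s : S) (a : A) : (S → A → ℝ) →L[ℝ] ℝ :=
  (ContinuousLinearMap.proj (R := ℝ) (φ := fun _ : A => ℝ) a).comp
    (ContinuousLinearMap.proj (R := ℝ) (φ := fun _ : S => A → ℝ) s)

lemma coordCLM_apply (s : S) (a : A) (v : S → A → ℝ) : coordCLM s a v = v s a := rfl

noncomputable def lseD (q : S → A → ℝ) (s : S) : (S → A → ℝ) →L[ℝ] ℝ :=
  ∑ a, softmax q s a • coordCLM s a

lemma hasFDerivAt_lse (q : S → A → ℝ) (s : S) :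
    HasFDerivAt (fun q' : S → A → ℝ => lse q' s) (lseD q s) q := by
  have hsum : HasFDerivAt (fun q' : S → A → ℝ => ∑ a, Real.exp (q' s a))
      (∑ a, Real.exp (q s a) • coordCLM s a) q := by
    apply HasFDerivAt.fun_sum
    intro a _
    exact (coordCLM s a).hasFDerivAt.exp
  have hpos : (0:ℝ) < ∑ a, Real.exp (q s a) :=
    Finset.sum_pos (fun _ _ => Real.exp_pos _) Finset.univ_nonempty
  have hlog := hsum.log hpos.ne'
  refine hlog.congr_fderiv ?_
  rw [lseD, Finset.smul_sum]
  refine Finset.sum_congr rfl fun a _ => ?_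
  rw [smul_smul, softmax, div_eq_inv_mul]

lemma lseD_apply (q : S → A → ℝ) (s : S) (v : S → A → ℝ) :
    lseD q s v = ∑ a, softmax q s a * v s a := by
  simp [lseD, ContinuousLinearMap.sum_apply, coordCLM_apply]

lemma norm_coord_le (v : S → A → ℝ) (s : S) (a : A) : |v s a| ≤ ‖v‖ :=
  le_trans (norm_le_pi_norm (v s) a) (norm_le_pi_norm v s)

lemma pi2_norm_le {v : S → A → ℝ} {c : ℝ} (hc : 0 ≤ c) (h : ∀ s a, |v s a| ≤ c) :
    ‖v‖ ≤ c := by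
  rw [pi_norm_le_iff_of_nonneg hc]
  intro s
  rw [pi_norm_le_iff_of_nonneg hc]
  exact h s

lemma abs_lseD_le (q : S → A → ℝ) (s : S) (v : S → A → ℝ) : |lseD q s v| ≤ ‖v‖ := by
  rw [lseD_apply]
  calc |∑ a, softmax q s a * v s a| ≤ ∑ a, |softmax q s a * v s a| :=
        Finset.abs_sum_le_sum_abs _ _
    _ ≤ ∑ a, softmax q s a * ‖v‖ := by
        refine Finset.sum_le_sum fun a _ => ?_
        rw [abs_mul, abs_of_nonneg ((softmax_isPolicy q).1 s a)]
        exact mul_le_mul_of_nonneg_left (norm_coord_le v s a) ((softmax_isPolicy q).1 s a)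
    _ = ‖v‖ := by rw [← Finset.sum_mul, (softmax_isPolicy q).2 s, one_mul]
end D
open Real BigOperators Finset Asymptotics
set_option linter.unusedSectionVars false
section Op
variable {S A : Type} [Fintype S] [Fintype A] [Nonempty S] [Nonempty A]

/-- The map `q ↦ (s,a) ↦ ∑ s', Phat s a s' * lse q s'`. -/
noncomputable def PhiMap (Phat : S → A → S → ℝ) (q : S → A → ℝ) : S → A → ℝ :=
  fun s a => ∑ s', Phat s a s' * lse q s'

/-- Its derivative as a CLM. -/
noncomputable def PhiD (Phat : S → A → S → ℝ) (q : S → A → ℝ) :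
    (S → A → ℝ) →L[ℝ] (S → A → ℝ) :=
  ContinuousLinearMap.pi fun s => ContinuousLinearMap.pi fun a =>
    ∑ s', Phat s a s' • lseD q s'

lemma PhiD_apply (Phat : S → A → S → ℝ) (q : S → A → ℝ) (v : S → A → ℝ) (s : S) (a : A) :
    PhiD Phat q v s a = ∑ s', Phat s a s' * lseD q s' v := by
  simp [PhiD, ContinuousLinearMap.sum_apply]

lemma hasFDerivAt_PhiMap (Phat : S → A → S → ℝ) (q : S → A → ℝ) :
    HasFDerivAt (PhiMap Phat) (PhiD Phat q) q := by
  rw [hasFDerivAt_pi']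
  intro s
  rw [PhiD, ContinuousLinearMap.proj_pi]
  rw [hasFDerivAt_pi']
  intro a
  rw [ContinuousLinearMap.proj_pi]
  exact HasFDerivAt.fun_sum fun s' _ => ((hasFDerivAt_lse q s').const_mul (Phat s a s'))

lemma norm_PhiD_apply_le (Phat : S → A → S → ℝ) (hPhat : IsKernel Phat)
    (q v : S → A → ℝ) : ‖PhiD Phat q v‖ ≤ ‖v‖ := by
  refine pi2_norm_le (norm_nonneg v) fun s a => ?_
  rw [PhiD_apply]
  calc |∑ s', Phat s a s' * lseD q s' v| ≤ ∑ s', |Phat s a s' * lseD q s' v| :=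
        Finset.abs_sum_le_sum_abs _ _
    _ ≤ ∑ s', Phat s a s' * ‖v‖ := by
        refine Finset.sum_le_sum fun s' _ => ?_
        rw [abs_mul, abs_of_nonneg (hPhat.1 s a s')]
        exact mul_le_mul_of_nonneg_left (abs_lseD_le q s' v) (hPhat.1 s a s')
    _ = ‖v‖ := by rw [← Finset.sum_mul, hPhat.2 s a, one_mul]

lemma norm_smul_PhiD_lt (γ : ℝ) (hγ : γ ∈ Set.Ioo (0:ℝ) 1)
    (Phat : S → A → S → ℝ) (hPhat : IsKernel Phat) (q : S → A → ℝ) :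
    ‖γ • PhiD Phat q‖ < 1 := by
  have h1 : ‖γ • PhiD Phat q‖ ≤ γ := by
    refine ContinuousLinearMap.opNorm_le_bound _ hγ.1.le fun v => ?_
    rw [ContinuousLinearMap.smul_apply, norm_smul, Real.norm_eq_abs, abs_of_pos hγ.1]
    exact mul_le_mul_of_nonneg_left (norm_PhiD_apply_le Phat hPhat q v) hγ.1.le
  exact lt_of_le_of_lt h1 hγ.2

end Op
open Real BigOperators Finset Asymptotics
set_option linter.unusedSectionVars false
section QDiff
variable {S A : Type} [Fintype S] [Fintype A] [Nonempty S] [Nonempty A] {d : ℕ}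
  {γ : ℝ} (hγ : γ ∈ Set.Ioo (0 : ℝ) 1)
  {Phat : S → A → S → ℝ} (hPhat : IsKernel Phat)
  {r : S → A → EuclideanSpace ℝ (Fin d) → ℝ} {U : S → A → ℝ}
  {Lr : ℝ} (hrd : ∀ s a, Differentiable ℝ (r s a))
  (hrb : ∀ s a θ, ‖gradient (r s a) θ‖ ≤ Lr)
  {Q : EuclideanSpace ℝ (Fin d) → S → A → ℝ}
  (hQ : ∀ θ s a, Q θ s a = r s a θ + U s a + γ * ∑ s', Phat s a s' * lse (Q θ) s')

local notation "X" => EuclideanSpace ℝ (Fin d)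

lemma norm_fderiv_eq_norm_gradient (f : X → ℝ) (x : X) :
    ‖fderiv ℝ f x‖ = ‖gradient f x‖ := by
  rw [gradient]
  exact ((InnerProductSpace.toDual ℝ _).symm.norm_map _).symm

include hrd hrb in
lemma r_lip (s : S) (a : A) (θ1 θ2 : X) : |r s a θ1 - r s a θ2| ≤ Lr * ‖θ1 - θ2‖ := by
  have := convex_univ.norm_image_sub_le_of_norm_fderiv_le (f := r s a) (C := Lr)
    (fun x _ => (hrd s a).differentiableAt)
    (fun x _ => by rw [norm_fderiv_eq_norm_gradient]; exact hrb s a x)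
    (Set.mem_univ θ2) (Set.mem_univ θ1)
  simpa using this

include hrb in
lemma Lr_nonneg : 0 ≤ Lr := le_trans (norm_nonneg _) (hrb Classical.ofNonempty
  Classical.ofNonempty 0)

include hγ hPhat hrd hrb hQ in
lemma Q_lip (θ1 θ2 : X) : ‖Q θ1 - Q θ2‖ ≤ (Lr / (1 - γ)) * ‖θ1 - θ2‖ := by
  have h1γ : (0:ℝ) < 1 - γ := by linarith [hγ.2]
  set D := ‖Q θ1 - Q θ2‖ with hD
  have hcoord : ∀ s a, |Q θ1 s a - Q θ2 s a| ≤ Lr * ‖θ1 - θ2‖ + γ * D := by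
    intro s a
    rw [hQ θ1 s a, hQ θ2 s a]
    have hlse : ∀ s', |lse (Q θ1) s' - lse (Q θ2) s'| ≤ D := by
      intro s'
      refine abs_lse_sub_le _ _ s' D fun a' => ?_
      have := norm_coord_le (Q θ1 - Q θ2) s' a'
      simpa using this
    have hsum : |∑ s', Phat s a s' * lse (Q θ1) s' - ∑ s', Phat s a s' * lse (Q θ2) s'| ≤ D := by
      rw [← Finset.sum_sub_distrib]
      calc |∑ s', (Phat s a s' * lse (Q θ1) s' - Phat s a s' * lse (Q θ2) s')|
          ≤ ∑ s', |Phat s a s' * lse (Q θ1) s' - Phat s a s' * lse (Q θ2) s'| :=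
            Finset.abs_sum_le_sum_abs _ _
        _ ≤ ∑ s', Phat s a s' * D := by
            refine Finset.sum_le_sum fun s' _ => ?_
            rw [← mul_sub, abs_mul, abs_of_nonneg (hPhat.1 s a s')]
            exact mul_le_mul_of_nonneg_left (hlse s') (hPhat.1 s a s')
        _ = D := by rw [← Finset.sum_mul, hPhat.2 s a, one_mul]
    calc |r s a θ1 + U s a + γ * ∑ s', Phat s a s' * lse (Q θ1) s' -
          (r s a θ2 + U s a + γ * ∑ s', Phat s a s' * lse (Q θ2) s')|
        = |(r s a θ1 - r s a θ2) + γ * (∑ s', Phat s a s' * lse (Q θ1) s'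
            - ∑ s', Phat s a s' * lse (Q θ2) s')| := by ring_nf
      _ ≤ |r s a θ1 - r s a θ2| + |γ * (∑ s', Phat s a s' * lse (Q θ1) s'
            - ∑ s', Phat s a s' * lse (Q θ2) s')| := abs_add_le _ _
      _ ≤ Lr * ‖θ1 - θ2‖ + γ * D := by
          refine add_le_add (r_lip hrd hrb s a θ1 θ2) ?_
          rw [abs_mul, abs_of_pos hγ.1]
          exact mul_le_mul_of_nonneg_left hsum hγ.1.le
  have hDle : D ≤ Lr * ‖θ1 - θ2‖ + γ * D := by
    refine pi2_norm_le ?_ fun s a => by simpa using hcoord s a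
    have h0 : (0:ℝ) ≤ D := norm_nonneg _
    have hL := Lr_nonneg (Lr := Lr) (r := r) hrb
    exact add_nonneg (mul_nonneg hL (norm_nonneg _)) (mul_nonneg hγ.1.le h0)
  rw [div_mul_eq_mul_div, le_div_iff₀ h1γ]
  nlinarith [norm_nonneg (Q θ1 - Q θ2)]


noncomputable def DrU (r : S → A → EuclideanSpace ℝ (Fin d) → ℝ) (θ : EuclideanSpace ℝ (Fin d)) :
    EuclideanSpace ℝ (Fin d) →L[ℝ] (S → A → ℝ) :=
  ContinuousLinearMap.pi fun s => ContinuousLinearMap.pi fun a => fderiv ℝ (r s a) θ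

lemma DrU_apply (θ : X) (v : X) (s : S) (a : A) : DrU r θ v s a = fderiv ℝ (r s a) θ v := rfl

noncomputable def GU (hγ : γ ∈ Set.Ioo (0:ℝ) 1) (hPhat : IsKernel Phat) (q : S → A → ℝ) :
    ((S → A → ℝ) →L[ℝ] (S → A → ℝ))ˣ :=
  Units.oneSub (γ • PhiD Phat q) (norm_smul_PhiD_lt γ hγ Phat hPhat q)

include hγ hPhat hrd hrb hQ in
lemma hasFDerivAt_Q (θ : X) :
    HasFDerivAt (fun θ' => Q θ')
      ((↑(GU hγ hPhat (Q θ))⁻¹ : (S → A → ℝ) →L[ℝ] (S → A → ℝ)).comp (DrU r θ)) θ := by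
  set G := GU hγ hPhat (Q θ) with hGdef
  set Dr := DrU r θ with hDr
  set L := (↑G⁻¹ : (S → A → ℝ) →L[ℝ] (S → A → ℝ)).comp Dr with hL
  have hGval : (↑G : (S → A → ℝ) →L[ℝ] (S → A → ℝ)) = 1 - γ • PhiD Phat (Q θ) := rfl
  have hGinv : ∀ w, (↑G : (S → A → ℝ) →L[ℝ] (S → A → ℝ)) ((↑G⁻¹ : (S → A → ℝ) →L[ℝ] (S → A → ℝ)) w) = w := by
    intro w
    rw [← ContinuousLinearMap.mul_apply, Units.mul_inv, ContinuousLinearMap.one_apply]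
  have hGL : ∀ v, L v - γ • PhiD Phat (Q θ) (L v) = Dr v := by
    intro v
    have h1 : (↑G : (S → A → ℝ) →L[ℝ] (S → A → ℝ)) (L v) = Dr v := hGinv (Dr v)
    rw [hGval] at h1
    simpa using h1
  have hbell : ∀ θ', Q θ' = (fun s a => r s a θ' + U s a) + γ • PhiMap Phat (Q θ') := by
    intro θ'
    funext s a
    simp [PhiMap, hQ θ' s a, Pi.add_apply, Pi.smul_apply, smul_eq_mul]
  have hA : (fun θ' => (fun s a => r s a θ' - r s a θ - fderiv ℝ (r s a) θ (θ' - θ)) :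
      X → S → A → ℝ) =o[nhds θ] fun θ' => θ' - θ := by
    rw [Asymptotics.isLittleO_pi]
    intro s
    rw [Asymptotics.isLittleO_pi]
    intro a
    exact hasFDerivAt_iff_isLittleO.1 ((hrd s a).differentiableAt.hasFDerivAt (x := θ))
  have hlip : ∀ θ1 θ2 : X, ‖Q θ1 - Q θ2‖ ≤ (Lr / (1 - γ)) * ‖θ1 - θ2‖ :=
    Q_lip hγ hPhat hrd hrb hQ
  have hQcont : Filter.Tendsto (fun θ' => Q θ') (nhds θ) (nhds (Q θ)) := by
    have h1γ : (0:ℝ) < 1 - γ := by linarith [hγ.2]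
    have hK : (0:ℝ) ≤ Lr / (1 - γ) :=
      div_nonneg (Lr_nonneg (Lr := Lr) (r := r) hrb) h1γ.le
    have : LipschitzWith ⟨Lr / (1 - γ), hK⟩ (fun θ' => Q θ') := by
      apply LipschitzWith.of_dist_le_mul
      intro x y
      rw [dist_eq_norm, dist_eq_norm]
      exact hlip x y
    exact this.continuous.tendsto θ
  have hB : (fun θ' => PhiMap Phat (Q θ') - PhiMap Phat (Q θ)
      - PhiD Phat (Q θ) (Q θ' - Q θ)) =o[nhds θ] fun θ' => θ' - θ := by
    have h1 := hasFDerivAt_iff_isLittleO.1 (hasFDerivAt_PhiMap Phat (Q θ))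
    have h2 := h1.comp_tendsto hQcont
    refine h2.trans_isBigO ?_
    refine Asymptotics.IsBigO.of_bound (Lr / (1 - γ)) (Filter.Eventually.of_forall fun θ' => ?_)
    simpa using hlip θ' θ
  rw [hasFDerivAt_iff_isLittleO]
  have hGe : (fun θ' => (↑G : (S → A → ℝ) →L[ℝ] (S → A → ℝ))
      (Q θ' - Q θ - L (θ' - θ))) =o[nhds θ] fun θ' => θ' - θ := by
    have heq : (fun θ' => (↑G : (S → A → ℝ) →L[ℝ] (S → A → ℝ)) (Q θ' - Q θ - L (θ' - θ)))
        = fun θ' => (fun s a => r s a θ' - r s a θ - fderiv ℝ (r s a) θ (θ' - θ))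
          + γ • (PhiMap Phat (Q θ') - PhiMap Phat (Q θ) - PhiD Phat (Q θ) (Q θ' - Q θ)) := by
      funext θ'
      have hstep : (↑G : (S → A → ℝ) →L[ℝ] (S → A → ℝ)) (Q θ' - Q θ - L (θ' - θ))
          = (Q θ' - Q θ - L (θ' - θ))
            - γ • (PhiD Phat (Q θ) (Q θ') - PhiD Phat (Q θ) (Q θ)
              - PhiD Phat (Q θ) (L (θ' - θ))) := by
        rw [hGval]
        simp only [ContinuousLinearMap.sub_apply, ContinuousLinearMap.one_apply,
          ContinuousLinearMap.smul_apply, map_sub, smul_sub]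
        abel
      rw [hstep]
      have hDrEq : Dr (θ' - θ) = L (θ' - θ) - γ • PhiD Phat (Q θ) (L (θ' - θ)) :=
        (hGL (θ' - θ)).symm
      have hr' : (fun s a => r s a θ' - r s a θ - fderiv ℝ (r s a) θ (θ' - θ))
          = Q θ' - Q θ - γ • (PhiMap Phat (Q θ') - PhiMap Phat (Q θ)) - Dr (θ' - θ) := by
        funext s a
        have h1 := hQ θ' s a
        have h2 := hQ θ s a
        have h3 : Dr (θ' - θ) s a = fderiv ℝ (r s a) θ (θ' - θ) := rfl
        simp only [Pi.sub_apply, Pi.smul_apply, smul_eq_mul, PhiMap, h3]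
        rw [h1, h2]
        ring
      rw [hr', hDrEq]
      simp only [map_sub, smul_sub]
      abel
    rw [heq]
    exact hA.add (hB.const_smul_left γ)
  have hfinal : (fun θ' => Q θ' - Q θ - L (θ' - θ)) =
      fun θ' => (↑G⁻¹ : (S → A → ℝ) →L[ℝ] (S → A → ℝ))
        ((↑G : (S → A → ℝ) →L[ℝ] (S → A → ℝ)) (Q θ' - Q θ - L (θ' - θ))) := by
    funext θ'
    rw [← ContinuousLinearMap.mul_apply, Units.inv_mul, ContinuousLinearMap.one_apply]
  rw [hfinal]
  exact ((↑G⁻¹ : (S → A → ℝ) →L[ℝ] (S → A → ℝ)).isBigO_comp _ (nhds θ)).trans_isLittleO hGe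

include hγ hPhat in
lemma GUinv_fixed (q : S → A → ℝ) (y : S → A → ℝ) :
    (↑(GU hγ hPhat q)⁻¹ : (S → A → ℝ) →L[ℝ] (S → A → ℝ)) y
      = y + γ • PhiD Phat q ((↑(GU hγ hPhat q)⁻¹ : (S → A → ℝ) →L[ℝ] (S → A → ℝ)) y) := by
  have h1 : (↑(GU hγ hPhat q) : (S → A → ℝ) →L[ℝ] (S → A → ℝ))
      ((↑(GU hγ hPhat q)⁻¹ : (S → A → ℝ) →L[ℝ] (S → A → ℝ)) y) = y := by
    rw [← ContinuousLinearMap.mul_apply, Units.mul_inv, ContinuousLinearMap.one_apply]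
  have h2 : (↑(GU hγ hPhat q) : (S → A → ℝ) →L[ℝ] (S → A → ℝ))
      = 1 - γ • PhiD Phat q := rfl
  rw [h2] at h1
  simp only [ContinuousLinearMap.sub_apply, ContinuousLinearMap.one_apply,
    ContinuousLinearMap.smul_apply] at h1
  rw [sub_eq_iff_eq_add] at h1
  exact h1

end QDiff
open Real BigOperators Finset Asymptotics
set_option linter.unusedSectionVars false
section Tele
variable {S A : Type} [Fintype S] [Fintype A] [Nonempty S] [Nonempty A]
  {γ : ℝ} (hγ : γ ∈ Set.Ioo (0 : ℝ) 1)
  {P' : S → A → S → ℝ} (hP' : IsKernel P')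
  {pol : S → A → ℝ} (hpol : IsPolicy pol)
  {η : S → ℝ} (hη : IsDist η)

include hP' hpol hη in
lemma abs_weighted_le (t : ℕ) (x : S → A → ℝ) :
    |∑ s, ∑ a, stateDist P' pol η t s * pol s a * x s a| ≤ ∑ s, ∑ a, |x s a| := by
  calc |∑ s, ∑ a, stateDist P' pol η t s * pol s a * x s a|
      ≤ ∑ s, ∑ a, |stateDist P' pol η t s * pol s a * x s a| := by
        refine (Finset.abs_sum_le_sum_abs _ _).trans ?_
        exact Finset.sum_le_sum fun s _ => Finset.abs_sum_le_sum_abs _ _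
    _ ≤ ∑ s, ∑ a, |x s a| := by
        refine Finset.sum_le_sum fun s _ => Finset.sum_le_sum fun a _ => ?_
        rw [abs_mul]
        have h2 : stateDist P' pol η t s ≤ 1 :=
          (Finset.single_le_sum (fun s' _ => stateDist_nonneg hP' hpol hη t s')
            (Finset.mem_univ s)).trans_eq (stateDist_sum hP' hpol hη t)
        have h4 : pol s a ≤ 1 :=
          (Finset.single_le_sum (fun a' _ => hpol.1 s a') (Finset.mem_univ a)).trans_eq
            (hpol.2 s)
        have h1 : stateDist P' pol η t s * pol s a ≤ 1 := by
          calc stateDist P' pol η t s * pol s a ≤ 1 * 1 :=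
              mul_le_mul h2 h4 (hpol.1 s a) zero_le_one
            _ = 1 := one_mul 1
        rw [abs_of_nonneg (mul_nonneg (stateDist_nonneg hP' hpol hη t s) (hpol.1 s a))]
        calc stateDist P' pol η t s * pol s a * |x s a| ≤ 1 * |x s a| :=
              mul_le_mul_of_nonneg_right h1 (abs_nonneg _)
          _ = |x s a| := one_mul _

include hP' hpol hη in
lemma visit_expansion (c : S → A → ℝ) (u : S → A → ℝ) (w : S → ℝ)
    (hw : ∀ s, w s = ∑ a, pol s a * u s a)
    (hu : ∀ s a, u s a = c s a + γ * ∑ s', P' s a s' * w s') :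
    ∀ N, ∑ s, η s * w s =
      (∑ t ∈ Finset.range N, γ ^ t * ∑ s, ∑ a, stateDist P' pol η t s * pol s a * c s a)
        + γ ^ N * ∑ s, stateDist P' pol η N s * w s := by
  intro N
  induction N with
  | zero => simp [stateDist]
  | succ N ih =>
    rw [ih, Finset.sum_range_succ]
    have key : ∑ s, stateDist P' pol η N s * w s =
        (∑ s, ∑ a, stateDist P' pol η N s * pol s a * c s a)
          + γ * ∑ s', stateDist P' pol η (N+1) s' * w s' := by
      have hstep : ∀ s, stateDist P' pol η N s * w s =
          (∑ a, stateDist P' pol η N s * pol s a * c s a)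
            + γ * ∑ a, ∑ s', stateDist P' pol η N s * pol s a * P' s a s' * w s' := by
        intro s
        rw [hw s, Finset.mul_sum, Finset.mul_sum, ← Finset.sum_add_distrib]
        refine Finset.sum_congr rfl fun a _ => ?_
        rw [hu s a]
        simp only [mul_add, Finset.mul_sum]
        refine congrArg₂ (· + ·) (by ring) ?_
        exact Finset.sum_congr rfl fun s' _ => by ring
      calc ∑ s, stateDist P' pol η N s * w s
          = ∑ s, ((∑ a, stateDist P' pol η N s * pol s a * c s a)
            + γ * ∑ a, ∑ s', stateDist P' pol η N s * pol s a * P' s a s' * w s') :=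
            Finset.sum_congr rfl fun s _ => hstep s
        _ = (∑ s, ∑ a, stateDist P' pol η N s * pol s a * c s a)
            + γ * ∑ s, ∑ a, ∑ s', stateDist P' pol η N s * pol s a * P' s a s' * w s' := by
            rw [Finset.sum_add_distrib, Finset.mul_sum]
        _ = (∑ s, ∑ a, stateDist P' pol η N s * pol s a * c s a)
            + γ * ∑ s', stateDist P' pol η (N+1) s' * w s' := by
            congr 1
            congr 1
            calc ∑ s, ∑ a, ∑ s', stateDist P' pol η N s * pol s a * P' s a s' * w s'
                = ∑ s, ∑ s', ∑ a, stateDist P' pol η N s * pol s a * P' s a s' * w s' :=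
                  Finset.sum_congr rfl fun s _ => Finset.sum_comm
              _ = ∑ s', ∑ s, ∑ a, stateDist P' pol η N s * pol s a * P' s a s' * w s' :=
                  Finset.sum_comm
              _ = ∑ s', stateDist P' pol η (N+1) s' * w s' := by
                  refine Finset.sum_congr rfl fun s' _ => ?_
                  show _ = (∑ s, ∑ a, stateDist P' pol η N s * pol s a * P' s a s') * w s'
                  rw [Finset.sum_mul]
                  refine Finset.sum_congr rfl fun s _ => ?_
                  rw [Finset.sum_mul]
    rw [key]
    ring

include hγ hP' hpol hη in
lemma sum_eta_w_eq_tsum (c : S → A → ℝ) (u : S → A → ℝ) (w : S → ℝ)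
    (hw : ∀ s, w s = ∑ a, pol s a * u s a)
    (hu : ∀ s a, u s a = c s a + γ * ∑ s', P' s a s' * w s') :
    ∑ s, η s * w s =
      ∑' t : ℕ, γ ^ t * ∑ s, ∑ a, stateDist P' pol η t s * pol s a * c s a := by
  set f : ℕ → ℝ := fun t => γ ^ t * ∑ s, ∑ a, stateDist P' pol η t s * pol s a * c s a with hf
  have hCc : ∀ t, |f t| ≤ γ ^ t * ∑ s, ∑ a, |c s a| := by
    intro t
    rw [hf, abs_mul, abs_of_nonneg (pow_nonneg hγ.1.le t)]
    refine mul_le_mul_of_nonneg_left ?_ (pow_nonneg hγ.1.le t)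
    calc |∑ s, ∑ a, stateDist P' pol η t s * pol s a * c s a|
        ≤ ∑ s, ∑ a, |stateDist P' pol η t s * pol s a * c s a| := by
          refine (Finset.abs_sum_le_sum_abs _ _).trans ?_
          exact Finset.sum_le_sum fun s _ => Finset.abs_sum_le_sum_abs _ _
      _ ≤ ∑ s, ∑ a, |c s a| := by
          refine Finset.sum_le_sum fun s _ => Finset.sum_le_sum fun a _ => ?_
          rw [abs_mul]
          have h1 : stateDist P' pol η t s * pol s a ≤ 1 := by
            have h2 : stateDist P' pol η t s ≤ 1 := by
              have := stateDist_sum hP' hpol hη t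
              have h3 : ∀ s' ∈ Finset.univ, 0 ≤ stateDist P' pol η t s' :=
                fun s' _ => stateDist_nonneg hP' hpol hη t s'
              calc stateDist P' pol η t s ≤ ∑ s', stateDist P' pol η t s' :=
                    Finset.single_le_sum h3 (Finset.mem_univ s)
                _ = 1 := this
            have h4 : pol s a ≤ 1 := by
              have := hpol.2 s
              calc pol s a ≤ ∑ a', pol s a' :=
                    Finset.single_le_sum (fun a' _ => hpol.1 s a') (Finset.mem_univ a)
                _ = 1 := this
            calc stateDist P' pol η t s * pol s a ≤ 1 * 1 := by
                  exact mul_le_mul h2 h4 (hpol.1 s a) zero_le_one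
              _ = 1 := one_mul 1
          rw [abs_of_nonneg (mul_nonneg (stateDist_nonneg hP' hpol hη t s) (hpol.1 s a))]
          calc stateDist P' pol η t s * pol s a * |c s a| ≤ 1 * |c s a| :=
                mul_le_mul_of_nonneg_right h1 (abs_nonneg _)
            _ = |c s a| := one_mul _
  have hsummable : Summable f := by
    refine Summable.of_norm_bounded ?_ hCc
    exact (summable_geometric_of_lt_one hγ.1.le hγ.2).mul_right _
  have htends := hsummable.hasSum.tendsto_sum_nat
  have hexp := visit_expansion hP' hpol hη c u w hw hu
  have hrem : Filter.Tendsto (fun N => γ ^ N * ∑ s, stateDist P' pol η N s * w s)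
      Filter.atTop (nhds 0) := by
    have hb : ∀ N, |γ ^ N * ∑ s, stateDist P' pol η N s * w s| ≤ γ ^ N * ∑ s, |w s| := by
      intro N
      rw [abs_mul, abs_of_nonneg (pow_nonneg hγ.1.le N)]
      refine mul_le_mul_of_nonneg_left ?_ (pow_nonneg hγ.1.le N)
      calc |∑ s, stateDist P' pol η N s * w s| ≤ ∑ s, |stateDist P' pol η N s * w s| :=
            Finset.abs_sum_le_sum_abs _ _
        _ ≤ ∑ s, |w s| := by
            refine Finset.sum_le_sum fun s _ => ?_
            rw [abs_mul, abs_of_nonneg (stateDist_nonneg hP' hpol hη N s)]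
            have h2 : stateDist P' pol η N s ≤ 1 := by
              calc stateDist P' pol η N s ≤ ∑ s', stateDist P' pol η N s' :=
                    Finset.single_le_sum (fun s' _ => stateDist_nonneg hP' hpol hη N s')
                      (Finset.mem_univ s)
                _ = 1 := stateDist_sum hP' hpol hη N
            calc stateDist P' pol η N s * |w s| ≤ 1 * |w s| :=
                  mul_le_mul_of_nonneg_right h2 (abs_nonneg _)
              _ = |w s| := one_mul _
    have hgeo : Filter.Tendsto (fun N : ℕ => γ ^ N * ∑ s, |w s|) Filter.atTop (nhds 0) := by
      have := tendsto_pow_atTop_nhds_zero_of_lt_one hγ.1.le hγ.2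
      simpa using this.mul_const (∑ s, |w s|)
    refine squeeze_zero_norm ?_ hgeo
    intro N
    exact hb N
  have htends2 : Filter.Tendsto (fun N => ∑ t ∈ Finset.range N, f t) Filter.atTop
      (nhds (∑ s, η s * w s)) := by
    have heq : (fun N => ∑ t ∈ Finset.range N, f t) =
        fun N => (∑ s, η s * w s) - γ ^ N * ∑ s, stateDist P' pol η N s * w s := by
      funext N
      have := hexp N
      linarith [this]
    rw [heq]
    simpa using (tendsto_const_nhds (x := ∑ s, η s * w s)).sub hrem
  exact tendsto_nhds_unique htends2 htends

end Tele
open Real BigOperators Finset Asymptotics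
set_option linter.unusedSectionVars false
section Inner
variable {S A : Type} [Fintype S] [Fintype A] [Nonempty S] [Nonempty A] {d : ℕ}
  {γ : ℝ} (hγ : γ ∈ Set.Ioo (0 : ℝ) 1)
  {P' : S → A → S → ℝ} (hP' : IsKernel P')
  {pol : S → A → ℝ} (hpol : IsPolicy pol)
  {η : S → ℝ} (hη : IsDist η)

local notation "X" => EuclideanSpace ℝ (Fin d)

lemma inner_gradient (f : X → ℝ) (x : X) (hf : DifferentiableAt ℝ f x) (v : X) :
    (inner ℝ (gradient f x) v : ℝ) = fderiv ℝ f x v := by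
  have h := hf.hasGradientAt.hasFDerivAt.fderiv
  rw [h]
  exact (InnerProductSpace.toDual_apply_apply).symm

include hγ hP' hpol hη in
lemma summable_discVec (g : S → A → X) (C : ℝ) (hb : ∀ s a, ‖g s a‖ ≤ C) :
    Summable (fun t : ℕ => γ ^ t • ∑ s, ∑ a, (stateDist P' pol η t s * pol s a) • g s a) := by
  refine Summable.of_norm_bounded (g := fun t => γ ^ t * C) ?_ ?_
  · exact (summable_geometric_of_lt_one hγ.1.le hγ.2).mul_right _
  · intro t
    rw [norm_smul, norm_pow, Real.norm_eq_abs, abs_of_pos hγ.1]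
    refine mul_le_mul_of_nonneg_left ?_ (pow_nonneg hγ.1.le t)
    calc ‖∑ s, ∑ a, (stateDist P' pol η t s * pol s a) • g s a‖
        ≤ ∑ s, ∑ a, ‖(stateDist P' pol η t s * pol s a) • g s a‖ := by
          refine (norm_sum_le _ _).trans (Finset.sum_le_sum fun s _ => norm_sum_le _ _)
      _ ≤ ∑ s, ∑ a, (stateDist P' pol η t s * pol s a) * C := by
          refine Finset.sum_le_sum fun s _ => Finset.sum_le_sum fun a _ => ?_
          rw [norm_smul, Real.norm_eq_abs,
            abs_of_nonneg (mul_nonneg (stateDist_nonneg hP' hpol hη t s) (hpol.1 s a))]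
          exact mul_le_mul_of_nonneg_left (hb s a)
            (mul_nonneg (stateDist_nonneg hP' hpol hη t s) (hpol.1 s a))
      _ = C := by
          simp only [← Finset.sum_mul]
          rw [show (∑ s, ∑ a, stateDist P' pol η t s * pol s a) = 1 from
            weight_sum hP' hpol hη t, one_mul]

include hγ hP' hpol hη in
lemma inner_discSumVec (g : S → A → X) (C : ℝ) (hb : ∀ s a, ‖g s a‖ ≤ C) (v : X) :
    (inner ℝ (discSumVec γ P' pol η g) v : ℝ) =
      ∑' t : ℕ, γ ^ t * ∑ s, ∑ a, stateDist P' pol η t s * pol s a * (inner ℝ (g s a) v : ℝ) := by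
  have hsum := summable_discVec hγ hP' hpol hη g C hb
  rw [real_inner_comm, discSumVec]
  rw [show (inner ℝ v (∑' t : ℕ, γ ^ t • ∑ s, ∑ a,
      (stateDist P' pol η t s * pol s a) • g s a) : ℝ) =
    innerSL ℝ v (∑' t : ℕ, γ ^ t • ∑ s, ∑ a,
      (stateDist P' pol η t s * pol s a) • g s a) from rfl]
  rw [ContinuousLinearMap.map_tsum (innerSL ℝ v) hsum]
  congr 1
  funext t
  rw [innerSL_apply_apply, real_inner_smul_right]
  congr 1
  rw [inner_sum]
  refine Finset.sum_congr rfl fun s _ => ?_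
  rw [inner_sum]
  refine Finset.sum_congr rfl fun a _ => ?_
  rw [real_inner_smul_right, real_inner_comm]

variable {r : S → A → EuclideanSpace ℝ (Fin d) → ℝ} {U : S → A → ℝ} {Lr : ℝ}
  (hrd : ∀ s a, Differentiable ℝ (r s a))
  (hrb : ∀ s a θ, ‖gradient (r s a) θ‖ ≤ Lr)

include hγ hP' hpol hη hrd hrb in
lemma norm_exp_fderiv_le (x : X) (t : ℕ) :
    ‖(γ ^ t • ∑ s, ∑ a, (stateDist P' pol η t s * pol s a) • fderiv ℝ (r s a) x :
      X →L[ℝ] ℝ)‖ ≤ γ ^ t * Lr := by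
  rw [norm_smul, norm_pow, Real.norm_eq_abs, abs_of_pos hγ.1]
  refine mul_le_mul_of_nonneg_left ?_ (pow_nonneg hγ.1.le t)
  calc ‖∑ s, ∑ a, (stateDist P' pol η t s * pol s a) • fderiv ℝ (r s a) x‖
      ≤ ∑ s, ∑ a, ‖(stateDist P' pol η t s * pol s a) • fderiv ℝ (r s a) x‖ :=
        (norm_sum_le _ _).trans (Finset.sum_le_sum fun s _ => norm_sum_le _ _)
    _ ≤ ∑ s, ∑ a, (stateDist P' pol η t s * pol s a) * Lr := by
        refine Finset.sum_le_sum fun s _ => Finset.sum_le_sum fun a _ => ?_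
        rw [norm_smul, Real.norm_eq_abs,
          abs_of_nonneg (mul_nonneg (stateDist_nonneg hP' hpol hη t s) (hpol.1 s a))]
        refine mul_le_mul_of_nonneg_left ?_
          (mul_nonneg (stateDist_nonneg hP' hpol hη t s) (hpol.1 s a))
        rw [norm_fderiv_eq_norm_gradient]
        exact hrb s a x
    _ = Lr := by
        simp only [← Finset.sum_mul]
        rw [show (∑ s, ∑ a, stateDist P' pol η t s * pol s a) = 1 from
          weight_sum hP' hpol hη t, one_mul]

include hγ hP' hpol hη hrd hrb in
lemma hasFDerivAt_expert (θ : X) :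
    HasFDerivAt (fun θ' => discSum γ P' pol η (fun s a => r s a θ' + U s a))
      (∑' t : ℕ, γ ^ t • ∑ s, ∑ a, (stateDist P' pol η t s * pol s a) •
        fderiv ℝ (r s a) θ) θ := by
  have hmain := hasFDerivAt_tsum (𝕜 := ℝ)
    (u := fun t : ℕ => γ ^ t * Lr)
    (f := fun (t : ℕ) (θ' : X) =>
      γ ^ t * ∑ s, ∑ a, stateDist P' pol η t s * pol s a * (r s a θ' + U s a))
    (f' := fun (t : ℕ) (x : X) =>
      γ ^ t • ∑ s, ∑ a, (stateDist P' pol η t s * pol s a) • fderiv ℝ (r s a) x)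
    (x₀ := θ)
    ((summable_geometric_of_lt_one hγ.1.le hγ.2).mul_right _)
    (fun t x => by
      refine HasFDerivAt.const_mul ?_ (γ ^ t)
      refine HasFDerivAt.fun_sum fun s _ => HasFDerivAt.fun_sum fun a _ => ?_
      exact (((hrd s a).differentiableAt.hasFDerivAt).add_const (U s a)).const_mul _)
    (fun t x => norm_exp_fderiv_le hγ hP' hpol hη hrd hrb x t)
    (by
      refine Summable.of_norm_bounded
        (g := fun t => γ ^ t * ∑ s, ∑ a, |r s a θ + U s a|) ?_ ?_
      · exact (summable_geometric_of_lt_one hγ.1.le hγ.2).mul_right _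
      · intro t
        rw [Real.norm_eq_abs, abs_mul, abs_of_pos (pow_pos hγ.1 t)]
        refine mul_le_mul_of_nonneg_left ?_ (pow_nonneg hγ.1.le t)
        exact abs_weighted_le hP' hpol hη t _) θ
  exact hmain

end Inner

/-- **Lemma 3, gradient of the surrogate objective.**
The gradient of the surrogate objective
`L̂(θ) = E_{τ ∼ (η,πᴱ,P)}[∑_t γ^t (r(s_t,a_t;θ) + U(s_t,a_t))] - E_{s₀∼η}[V_θ(s₀)]`
equals the difference of expected discounted reward gradients along expert
trajectories (under `P`) and agent trajectories (under the optimal policy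
`π_θ = softmax (Q θ)` in the estimated world model `P̂`). -/
theorem stmt6 {S A : Type} [Fintype S] [Fintype A] [Nonempty S] [Nonempty A] (d : ℕ)
    (γ : ℝ) (hγ : γ ∈ Set.Ioo (0 : ℝ) 1)
    (P : S → A → S → ℝ) (hP : IsKernel P)
    (Phat : S → A → S → ℝ) (hPhat : IsKernel Phat)
    (η : S → ℝ) (hη : IsDist η)
    (piE : S → A → ℝ) (hpiE : IsPolicy piE)
    (r : S → A → EuclideanSpace ℝ (Fin d) → ℝ) (U : S → A → ℝ)
    (Lr : ℝ) (hrd : ∀ s a, Differentiable ℝ (r s a))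
    (hrb : ∀ s a θ, ‖gradient (r s a) θ‖ ≤ Lr)
    (Q : EuclideanSpace ℝ (Fin d) → S → A → ℝ)
    (hQ : ∀ θ s a, Q θ s a = r s a θ + U s a + γ * ∑ s', Phat s a s' * lse (Q θ) s')
    (θ : EuclideanSpace ℝ (Fin d)) :
    gradient (fun θ' =>
        discSum γ P piE η (fun s a => r s a θ' + U s a) - ∑ s, η s * lse (Q θ') s) θ =
      discSumVec γ P piE η (fun s a => gradient (r s a) θ) -
        discSumVec γ Phat (softmax (Q θ)) η (fun s a => gradient (r s a) θ) := by
  have hpol : IsPolicy (softmax (Q θ)) := softmax_isPolicy (Q θ)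
  have hQd := hasFDerivAt_Q hγ hPhat hrd hrb hQ θ
  set DQ : EuclideanSpace ℝ (Fin d) →L[ℝ] (S → A → ℝ) :=
    (↑(GU hγ hPhat (Q θ))⁻¹ : (S → A → ℝ) →L[ℝ] (S → A → ℝ)).comp (DrU r θ) with hDQdef
  have hW : HasFDerivAt (fun θ' => ∑ s, η s * lse (Q θ') s)
      (∑ s, η s • ((lseD (Q θ) s).comp DQ)) θ :=
    HasFDerivAt.fun_sum fun s _ =>
      (((hasFDerivAt_lse (Q θ) s).comp θ hQd)).const_mul (η s)
  have hE := hasFDerivAt_expert hγ hP hpiE hη hrd hrb (U := U) θ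
  have hF := hE.sub hW
  have hgoal : HasGradientAt (fun θ' =>
        discSum γ P piE η (fun s a => r s a θ' + U s a) - ∑ s, η s * lse (Q θ') s)
      (discSumVec γ P piE η (fun s a => gradient (r s a) θ) -
        discSumVec γ Phat (softmax (Q θ)) η (fun s a => gradient (r s a) θ)) θ := by
    rw [hasGradientAt_iff_hasFDerivAt]
    have hid : (InnerProductSpace.toDual ℝ (EuclideanSpace ℝ (Fin d)))
        (discSumVec γ P piE η (fun s a => gradient (r s a) θ) -
          discSumVec γ Phat (softmax (Q θ)) η (fun s a => gradient (r s a) θ))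
        = (∑' t : ℕ, γ ^ t • ∑ s, ∑ a, (stateDist P piE η t s * piE s a) •
            fderiv ℝ (r s a) θ) - ∑ s, η s • ((lseD (Q θ) s).comp DQ) := by
      apply ContinuousLinearMap.ext
      intro v
      rw [InnerProductSpace.toDual_apply_apply, ContinuousLinearMap.sub_apply, inner_sub_left]
      have hbg : ∀ s a, ‖gradient (r s a) θ‖ ≤ Lr := fun s a => hrb s a θ
      congr 1
      · -- expert side
        rw [inner_discSumVec hγ hP hpiE hη _ Lr hbg v]
        have hTsum : Summable (fun t : ℕ => γ ^ t • ∑ s, ∑ a,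
            (stateDist P piE η t s * piE s a) • fderiv ℝ (r s a) θ) :=
          Summable.of_norm_bounded (g := fun t => γ ^ t * Lr)
            ((summable_geometric_of_lt_one hγ.1.le hγ.2).mul_right _)
            (fun t => norm_exp_fderiv_le hγ hP hpiE hη hrd hrb θ t)
        rw [show ((∑' t : ℕ, γ ^ t • ∑ s, ∑ a, (stateDist P piE η t s * piE s a) •
              fderiv ℝ (r s a) θ) v : ℝ)
            = (ContinuousLinearMap.apply ℝ ℝ v) (∑' t : ℕ, γ ^ t • ∑ s, ∑ a,
              (stateDist P piE η t s * piE s a) • fderiv ℝ (r s a) θ) from rfl]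
        rw [ContinuousLinearMap.map_tsum (ContinuousLinearMap.apply ℝ ℝ v) hTsum]
        refine tsum_congr fun t => ?_
        rw [ContinuousLinearMap.apply_apply, ContinuousLinearMap.smul_apply,
          ContinuousLinearMap.sum_apply, smul_eq_mul]
        congr 1
        refine Finset.sum_congr rfl fun s _ => ?_
        rw [ContinuousLinearMap.sum_apply]
        refine Finset.sum_congr rfl fun a _ => ?_
        rw [ContinuousLinearMap.smul_apply, smul_eq_mul]
        rw [inner_gradient (r s a) θ (hrd s a).differentiableAt v]
      · -- agent side
        rw [inner_discSumVec hγ hPhat hpol hη _ Lr hbg v]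
        have hDWv : (∑ s, η s • ((lseD (Q θ) s).comp DQ)) v
            = ∑ s, η s * lseD (Q θ) s (DQ v) := by
          rw [ContinuousLinearMap.sum_apply]
          refine Finset.sum_congr rfl fun s _ => ?_
          rw [ContinuousLinearMap.smul_apply, smul_eq_mul, ContinuousLinearMap.comp_apply]
        rw [hDWv]
        have hw : ∀ s, lseD (Q θ) s (DQ v) = ∑ a, softmax (Q θ) s a * (DQ v) s a :=
          fun s => lseD_apply (Q θ) s (DQ v)
        have hu : ∀ s a, (DQ v) s a = fderiv ℝ (r s a) θ v
            + γ * ∑ s', Phat s a s' * lseD (Q θ) s' (DQ v) := by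
          intro s a
          have h := GUinv_fixed hγ hPhat (Q θ) (DrU r θ v)
          have h2 : DQ v = (↑(GU hγ hPhat (Q θ))⁻¹ :
              (S → A → ℝ) →L[ℝ] (S → A → ℝ)) (DrU r θ v) := rfl
          rw [h2]
          rw [show ((↑(GU hγ hPhat (Q θ))⁻¹ : (S → A → ℝ) →L[ℝ] (S → A → ℝ))
              (DrU r θ v)) s a
            = (DrU r θ v + γ • PhiD Phat (Q θ)
              ((↑(GU hγ hPhat (Q θ))⁻¹ : (S → A → ℝ) →L[ℝ] (S → A → ℝ))
                (DrU r θ v))) s a from by rw [← h]]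
          simp only [Pi.add_apply, Pi.smul_apply, smul_eq_mul, PhiD_apply, DrU_apply]
        have hkey := sum_eta_w_eq_tsum hγ hPhat hpol hη
          (fun s a => fderiv ℝ (r s a) θ v) (DQ v) (fun s => lseD (Q θ) s (DQ v)) hw hu
        rw [hkey]
        refine tsum_congr fun t => ?_
        congr 1
        refine Finset.sum_congr rfl fun s _ => Finset.sum_congr rfl fun a _ => ?_
        rw [inner_gradient (r s a) θ (hrd s a).differentiableAt v]
    rw [hid]
    exact hF
  exact hgoal.gradient
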